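/- The function g : ℝ → ℝ given by g(x) = 2Λ(θ_x) + Λ(θ_x + π/x) + Λ(θ_x − π/x) − Λ(2θ_x − π/2) is strictly increasing on the interval [5, ∞). -/

import Mathlib

/-- The Lobachevsky function `Λ(z) = -∫₀^z log |2 sin t| dt`. -/
noncomputable def lob (z : ℝ) : ℝ := -∫ t in (0:ℝ)..z, Real.log |2 * Real.sin t|

/-- `θ_x = π/2 - arccos (1 / (2 cos (π/x)))`. -/
noncomputable def theta (x : ℝ) : ℝ :=
  Real.pi / 2 - Real.arccos (1 / (2 * Real.cos (Real.pi / x)))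

/-- `g(x) = 2Λ(θ_x) + Λ(θ_x + π/x) + Λ(θ_x − π/x) − Λ(2θ_x − π/2)`. -/
noncomputable def lobG (x : ℝ) : ℝ :=
  2 * lob (theta x) + lob (theta x + Real.pi / x) + lob (theta x - Real.pi / x)
    - lob (2 * theta x - Real.pi / 2)

/-!
Write `p = π / x`, so that `g(x) = F(θ_x, p)` with
`F(θ, p) = 2Λ(θ) + Λ(θ + p) + Λ(θ - p) - Λ(2θ - π/2)`, and recall `Λ'(z) = -log |2 sin z|`.
The relation `2 sin θ_x cos p = 1` defining `θ_x` is exactly the critical point equation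
`∂F/∂θ = 0`, in the form `(2 sin θ)² · 2 sin (θ + p) · 2 sin (θ - p) = (2 cos 2θ)²`.
So only the `p`-dependence contributes to the derivative:
`g'(x) = (π / x²) (log |2 sin (θ_x + p)| - log |2 sin (θ_x - p)|)`,
which is positive because `0 < p < θ_x < π/2`.
-/

open Real Set MeasureTheory

lemma intervalIntegrable_log_abs_two_mul_sin (a b : ℝ) :
    IntervalIntegrable (fun t ↦ log |2 * sin t|) volume a b := by
  simpa only [Function.comp_def, log_abs] using
    (analyticOnNhd_const.mul analyticOnNhd_sin).meromorphicOn.intervalIntegrable_log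
      (a := a) (b := b)

lemma hasDerivAt_lob {z : ℝ} (hz : sin z ≠ 0) : HasDerivAt lob (-log |2 * sin z|) z := by
  have hcont : ContinuousAt (fun t ↦ log |2 * sin t|) z :=
    (continuous_const.mul continuous_sin).abs.continuousAt.log (by simpa using hz)
  have hmeas : Measurable fun t ↦ log |2 * sin t| := by fun_prop
  exact (intervalIntegral.integral_hasDerivAt_right (intervalIntegrable_log_abs_two_mul_sin 0 z)
    hmeas.stronglyMeasurable.stronglyMeasurableAtFilter hcont).neg

lemma HasDerivAt.lob {f : ℝ → ℝ} {f' x : ℝ} (hf : HasDerivAt f f' x)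
    (hx : Real.sin (f x) ≠ 0) :
    HasDerivAt (fun y ↦ _root_.lob (f y)) (-Real.log |2 * Real.sin (f x)| * f') x :=
  (hasDerivAt_lob hx).comp x hf

lemma hasDerivAt_lobG {x θ' : ℝ} (hθ : HasDerivAt theta θ' x) (hx : x ≠ 0)
    (h₁ : sin (theta x) ≠ 0) (h₂ : sin (theta x + π / x) ≠ 0)
    (h₃ : sin (theta x - π / x) ≠ 0) (h₄ : cos (2 * theta x) ≠ 0) :
    HasDerivAt lobG
      (-θ' * (2 * log |2 * sin (theta x)| + log |2 * sin (theta x + π / x)|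
          + log |2 * sin (theta x - π / x)| - 2 * log |2 * cos (2 * theta x)|)
        + π / x ^ 2 * (log |2 * sin (theta x + π / x)| - log |2 * sin (theta x - π / x)|)) x := by
  have hp : HasDerivAt (fun y ↦ π / y) (-(π / x ^ 2)) x := by
    simpa [div_eq_mul_inv] using (hasDerivAt_inv hx).const_mul π
  have h₄' : sin (2 * theta x - π / 2) ≠ 0 := by rwa [sin_sub_pi_div_two, neg_ne_zero]
  refine ((((hθ.lob h₁).const_mul 2).add ((hθ.add hp).lob h₂)).add ((hθ.sub hp).lob h₃)).sub
    (((hθ.const_mul 2).sub_const (π / 2)).lob h₄') |>.congr_deriv ?_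
  simp only [Pi.add_apply, Pi.sub_apply, sin_sub_pi_div_two, mul_neg, abs_neg]
  ring

lemma log_abs_two_sin_critical {θ p : ℝ} (h : 2 * sin θ * cos p = 1) (h₂ : sin (θ + p) ≠ 0)
    (h₃ : sin (θ - p) ≠ 0) :
    2 * log |2 * sin θ| + log |2 * sin (θ + p)| + log |2 * sin (θ - p)|
      = 2 * log |2 * cos (2 * θ)| := by
  have h₁ : sin θ ≠ 0 := by rintro h₀; simp [h₀] at h
  have key :
      (2 * sin θ) ^ 2 * (2 * sin (θ + p) * (2 * sin (θ - p))) = (2 * cos (2 * θ)) ^ 2 := by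
    rw [sin_add, sin_sub, cos_two_mul]
    linear_combination (4 * (2 * sin θ * cos p + 1)) * h
      + (-16 * sin θ ^ 2 * sin p ^ 2 - 16 * (cos θ ^ 2 - sin θ ^ 2)) * sin_sq_add_cos_sq θ
      + (-16 * sin θ ^ 2 * (1 - sin θ ^ 2)) * sin_sq_add_cos_sq p
  have := congrArg log key
  simp only [log_abs]
  rw [log_mul (by positivity) (by simp [h₂, h₃]), log_mul (by simpa) (by simpa), log_pow,
    log_pow] at this
  push_cast at this
  linarith

lemma sin_sub_lt_sin_add {θ p : ℝ} (hθ : θ ∈ Ioo (-(π / 2)) (π / 2)) (hp : p ∈ Ioo 0 π) :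
    sin (θ - p) < sin (θ + p) := by
  have : 0 < cos θ * sin p := mul_pos (cos_pos_of_mem_Ioo hθ) (sin_pos_of_mem_Ioo hp)
  rw [sin_add, sin_sub]
  linarith

lemma log_abs_two_sin_sub_lt {θ p : ℝ} (hp : 0 < p) (hpθ : p < θ) (hθ : θ < π / 2) :
    log |2 * sin (θ - p)| < log |2 * sin (θ + p)| := by
  have h₀ : 0 < sin (θ - p) := sin_pos_of_pos_of_lt_pi (by linarith) (by linarith)
  have h₁ := sin_sub_lt_sin_add (θ := θ) (p := p) ⟨by linarith, hθ⟩ ⟨hp, by linarith⟩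
  rw [abs_of_pos (by positivity), abs_of_pos (by linarith)]
  exact log_lt_log (by positivity) (by linarith)

section
variable {p : ℝ}

lemma one_lt_two_mul_cos_sq (hp : p ∈ Ioo (-(π / 4)) (π / 4)) : 1 < 2 * cos p ^ 2 := by
  have := cos_pos_of_mem_Ioo (x := 2 * p) ⟨by linarith [hp.1], by linarith [hp.2]⟩
  rw [cos_two_mul] at this
  linarith

lemma inv_two_cos_mem_Ioo (hp : p ∈ Ioo (-(π / 4)) (π / 4)) : 1 / (2 * cos p) ∈ Ioo 0 1 := by
  have h₀ : 0 < cos p :=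
    cos_pos_of_mem_Ioo ⟨by linarith [hp.1, pi_pos], by linarith [hp.2, pi_pos]⟩
  have h₁ : 1 < 2 * cos p := by nlinarith [one_lt_two_mul_cos_sq hp, cos_le_one p]
  exact ⟨by positivity, (div_lt_one (by positivity)).2 h₁⟩

lemma sin_lt_inv_two_cos (hp : p ∈ Ioo (-(π / 4)) (π / 4)) : sin p < 1 / (2 * cos p) := by
  have h₀ : 0 < 2 * cos p := one_div_pos.1 (inv_two_cos_mem_Ioo hp).1
  have h₁ : sin (2 * p) < 1 := by
    simpa using sin_lt_sin_of_lt_of_le_pi_div_two (x := 2 * p) (y := π / 2)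
      (by linarith [hp.1]) le_rfl (by linarith [hp.2])
  rw [sin_two_mul] at h₁
  rw [lt_div_iff₀ h₀]
  linarith

end

lemma theta_eq_arcsin (x : ℝ) : theta x = arcsin (1 / (2 * cos (π / x))) := by
  rw [theta, arccos_eq_pi_div_two_sub_arcsin, sub_sub_cancel]

section
variable {x : ℝ}

lemma pi_div_mem_Ioo (hx : 4 < x) : π / x ∈ Ioo (-(π / 4)) (π / 4) :=
  ⟨by linarith [div_pos pi_pos (by linarith : (0 : ℝ) < x), pi_pos],
    div_lt_div_of_pos_left pi_pos (by norm_num) hx⟩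

lemma two_mul_sin_theta_mul_cos (hx : 4 < x) : 2 * sin (theta x) * cos (π / x) = 1 := by
  have hy := inv_two_cos_mem_Ioo (pi_div_mem_Ioo hx)
  rw [theta_eq_arcsin, sin_arcsin (by linarith [hy.1]) hy.2.le]
  have : cos (π / x) ≠ 0 := by rintro h; simp [h] at hy
  field_simp

lemma pi_div_lt_theta (hx : 4 < x) : π / x < theta x := by
  have hp := pi_div_mem_Ioo hx
  rw [theta_eq_arcsin,
    lt_arcsin_iff_sin_lt' ⟨by linarith [hp.1, pi_pos], by linarith [hp.2, pi_pos]⟩]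
  exact sin_lt_inv_two_cos hp

lemma theta_lt_pi_div_two (hx : 4 < x) : theta x < π / 2 := by
  rw [theta_eq_arcsin, arcsin_lt_pi_div_two]
  exact (inv_two_cos_mem_Ioo (pi_div_mem_Ioo hx)).2

lemma cos_two_mul_theta_pos (hx : 4 < x) : 0 < cos (2 * theta x) := by
  have h := two_mul_sin_theta_mul_cos hx
  have hsin : sin (theta x) ≠ 0 := by rintro h₀; simp [h₀] at h
  have := mul_pos (sq_pos_of_ne_zero hsin) (sub_pos.2 (one_lt_two_mul_cos_sq (pi_div_mem_Ioo hx)))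
  rw [cos_two_mul, cos_sq']
  nlinarith

lemma differentiableAt_theta (hx : 4 < x) : DifferentiableAt ℝ theta x := by
  have hy := inv_two_cos_mem_Ioo (pi_div_mem_Ioo hx)
  have hcos : cos (π / x) ≠ 0 := by rintro h; simp [h] at hy
  have hcos₂ : 2 * cos (π / x) ≠ 0 := by positivity
  have hx₀ : x ≠ 0 := by linarith
  have : DifferentiableAt ℝ arccos (1 / (2 * cos (π / x))) :=
    differentiableAt_arccos.2 ⟨by linarith [hy.1], hy.2.ne⟩
  unfold theta
  fun_prop (disch := assumption)

lemma hasDerivAt_lobG_of_four_lt (hx : 4 < x) :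
    HasDerivAt lobG
      (π / x ^ 2 * (log |2 * sin (theta x + π / x)| - log |2 * sin (theta x - π / x)|)) x := by
  have hpθ := pi_div_lt_theta hx
  have hθ := theta_lt_pi_div_two hx
  have hp₀ : 0 < π / x := div_pos pi_pos (by linarith)
  have h₃ : 0 < sin (theta x - π / x) := sin_pos_of_pos_of_lt_pi (by linarith) (by linarith)
  have h₂ : 0 < sin (theta x + π / x) :=
    h₃.trans (sin_sub_lt_sin_add ⟨by linarith, hθ⟩ ⟨hp₀, by linarith⟩)
  have h := hasDerivAt_lobG (differentiableAt_theta hx).hasDerivAt (by linarith)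
    (sin_pos_of_pos_of_lt_pi (by linarith) (by linarith)).ne' h₂.ne' h₃.ne'
    (cos_two_mul_theta_pos hx).ne'
  rwa [log_abs_two_sin_critical (two_mul_sin_theta_mul_cos hx) h₂.ne' h₃.ne', sub_self, mul_zero,
    zero_add] at h

end

/-- The function `g` is strictly increasing on `[5, ∞)`. -/
theorem lobG_strictMonoOn : StrictMonoOn lobG (Set.Ici (5 : ℝ)) := by
  have four_lt : ∀ x ∈ Ici (5 : ℝ), 4 < x := fun x hx ↦ by linarith [mem_Ici.1 hx]
  refine strictMonoOn_of_hasDerivWithinAt_pos (convex_Ici 5)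
    (fun x hx ↦ (hasDerivAt_lobG_of_four_lt (four_lt x hx)).continuousAt.continuousWithinAt)
    (fun x hx ↦ (hasDerivAt_lobG_of_four_lt (four_lt x (interior_subset hx))).hasDerivWithinAt)
    (fun x hx ↦ ?_)
  have hx := four_lt x (interior_subset hx)
  exact mul_pos (by positivity) (sub_pos.2 (log_abs_two_sin_sub_lt
    (div_pos pi_pos (by linarith)) (pi_div_lt_theta hx) (theta_lt_pi_div_two hx)))
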